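/- arXiv:2401.03058 — 6 statements merged into one kernel-verified Lean document; each statement's English description precedes it below -/
import Mathlib

section
/- Let P be the orthogonal projection matrix onto a linear subspace V of ℝ^d and let H be a symmetric positive semidefinite d × d matrix. Then (P s)ᵀ H (P s) ≤ sᵀ H s holds for all s ∈ ℝ^d if and only if V is an invariant subspace of H, i.e., H v ∈ V for all v ∈ V. -/
open scoped RealInnerProductSpace

/-- For the orthogonal projection `P` onto a subspace `V` of `ℝ^d` and a symmetric positive
semidefinite `H`, `⟪P s, H (P s)⟫ ≤ ⟪s, H s⟫` for all `s` iff `V` is invariant under `H`. -/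
theorem stmt2 {d : ℕ} (V : Submodule ℝ (EuclideanSpace ℝ (Fin d)))
    (H : EuclideanSpace ℝ (Fin d) →ₗ[ℝ] EuclideanSpace ℝ (Fin d))
    (hsym : ∀ x y, ⟪H x, y⟫ = ⟪x, H y⟫)
    (hpsd : ∀ x, 0 ≤ ⟪x, H x⟫) :
    (∀ s : EuclideanSpace ℝ (Fin d),
        ⟪(V.orthogonalProjection s : EuclideanSpace ℝ (Fin d)),
          H (V.orthogonalProjection s : EuclideanSpace ℝ (Fin d))⟫ ≤ ⟪s, H s⟫)
      ↔ ∀ v ∈ V, H v ∈ V := by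
  constructor
  · intro hle v hv
    rw [← Submodule.orthogonal_orthogonal V, Submodule.mem_orthogonal]
    intro w hw
    set a : ℝ := ⟪w, H v⟫ with ha
    set b : ℝ := ⟪w, H w⟫ with hb
    have key : ∀ t : ℝ, 0 ≤ b * (t * t) + (2 * a) * t + 0 := by
      intro t
      have hPv : (V.orthogonalProjection (v + t • w) : EuclideanSpace ℝ (Fin d)) = v := by
        simp [Submodule.orthogonalProjectionOnto_mem_subspace_eq_self ⟨v, hv⟩,
          Submodule.orthogonalProjectionOnto_apply_of_mem_orthogonal hw]
      have hs := hle (v + t • w)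
      rw [hPv] at hs
      have hvw : ⟪v, H w⟫ = a := by rw [ha, ← hsym, real_inner_comm]
      have expand : ⟪v + t • w, H (v + t • w)⟫
          = ⟪v, H v⟫ + (b * (t * t) + (2 * a) * t + 0) := by
        simp only [map_add, map_smul, inner_add_left, inner_add_right,
          real_inner_smul_left, real_inner_smul_right, hvw, ← ha, ← hb]
        ring
      rw [expand] at hs
      linarith
    have hd := discrim_le_zero key
    have : (2 * a) ^ 2 - 4 * b * 0 ≤ 0 := by
      simpa [discrim] using hd
    nlinarith [sq_nonneg a]
  · intro hinv s
    set v : EuclideanSpace ℝ (Fin d) := (V.orthogonalProjection s : EuclideanSpace ℝ (Fin d))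
      with hv
    have hvV : v ∈ V := (V.orthogonalProjection s).2
    have hwV : s - v ∈ Vᗮ := V.sub_starProjection_mem_orthogonal s
    set w : EuclideanSpace ℝ (Fin d) := s - v with hwdef
    have hsvw : s = v + w := by rw [hwdef]; abel
    have h1 : ⟪w, H v⟫ = 0 := by
      have := hwV (H v) (hinv v hvV)
      rwa [real_inner_comm] at this
    have h2 : ⟪v, H w⟫ = 0 := by rw [← hsym, real_inner_comm]; exact h1
    have h3 : 0 ≤ ⟪w, H w⟫ := hpsd w
    calc ⟪v, H v⟫ ≤ ⟪v, H v⟫ + ⟪v, H w⟫ + ⟪w, H v⟫ + ⟪w, H w⟫ := by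
          rw [h1, h2]; linarith
      _ = ⟪s, H s⟫ := by
          rw [hsvw]; simp only [map_add, inner_add_left, inner_add_right]; ring
end

section
/- Let A be a symmetric d × d matrix, b nonzero, v_1 = b/‖b‖, and let β_{j+1} be the Lanczos coefficients. Then for each j ≥ 1, β_{j+1} equals the maximum over unit vectors w in the Krylov subspace K_j(A,b) of dist(A w, K_j(A,b)). -/
open scoped RealInnerProductSpace

/-- The `j`-th Krylov subspace `K_j(A,b) = span{b, Ab, ..., A^{j-1}b}`. -/
def Krylov {d : ℕ}
    (A : EuclideanSpace ℝ (Fin d) →ₗ[ℝ] EuclideanSpace ℝ (Fin d))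
    (b : EuclideanSpace ℝ (Fin d)) (j : ℕ) :
    Submodule ℝ (EuclideanSpace ℝ (Fin d)) :=
  Submodule.span ℝ ((fun i : ℕ => (A ^ i) b) '' Set.Iio j)

lemma infDist_smul_add_aux {d : ℕ} (K : Submodule ℝ (EuclideanSpace ℝ (Fin d)))
    (u : EuclideanSpace ℝ (Fin d)) (hu : ‖u‖ = 1)
    (hortho : ∀ y ∈ K, ⟪y, u⟫ = 0) (c : ℝ) (k : EuclideanSpace ℝ (Fin d)) (hk : k ∈ K) :
    Metric.infDist (c • u + k) (K : Set (EuclideanSpace ℝ (Fin d))) = |c| := by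
  apply le_antisymm
  · calc Metric.infDist (c • u + k) (K : Set _) ≤ dist (c • u + k) k :=
          Metric.infDist_le_dist_of_mem hk
      _ = ‖c • u‖ := by rw [dist_eq_norm]; congr 1; abel
      _ = |c| := by rw [norm_smul, hu, mul_one, Real.norm_eq_abs]
  · rw [Metric.infDist_eq_iInf]
    have : Nonempty (K : Set (EuclideanSpace ℝ (Fin d))) := ⟨⟨0, K.zero_mem⟩⟩
    apply le_ciInf
    rintro ⟨y, hy⟩
    have h1 : ⟪c • u + k - y, u⟫ = c := by
      rw [inner_sub_left, inner_add_left, real_inner_smul_left,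
        hortho k hk, hortho y hy, real_inner_self_eq_norm_sq, hu]
      ring
    calc |c| = |⟪c • u + k - y, u⟫| := by rw [h1]
      _ ≤ ‖c • u + k - y‖ * ‖u‖ := abs_real_inner_le_norm _ _
      _ = dist (c • u + k) y := by rw [hu, mul_one, dist_eq_norm]

/-- The Lanczos coefficient `β_{j+1}` equals the maximum over unit vectors `w` in the Krylov
subspace `K_j(A,b)` of the distance from `Aw` to `K_j(A,b)`. -/
theorem stmt9 {d : ℕ}
    (A : EuclideanSpace ℝ (Fin d) →ₗ[ℝ] EuclideanSpace ℝ (Fin d))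
    (hsym : ∀ x y, ⟪A x, y⟫ = ⟪x, A y⟫)
    (b : EuclideanSpace ℝ (Fin d)) (hb : b ≠ 0)
    (v : ℕ → EuclideanSpace ℝ (Fin d)) (α β : ℕ → ℝ) (j : ℕ) (hj : 1 ≤ j)
    (hv0 : v 0 = 0) (hβ1 : β 1 = 0) (hv1 : v 1 = ‖b‖⁻¹ • b)
    (hβpos : ∀ l : ℕ, 0 ≤ β l)
    (horth : ∀ i k : ℕ, 1 ≤ i → i ≤ j + 1 → 1 ≤ k → k ≤ j + 1 →
      ⟪v i, v k⟫ = if i = k then 1 else 0)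
    (hrec : ∀ l : ℕ, 1 ≤ l → l ≤ j →
      A (v l) = β (l + 1) • v (l + 1) + α l • v l + β l • v (l - 1))
    (hspan : ∀ l : ℕ, l ≤ j →
      Submodule.span ℝ (v '' Set.Icc 1 l) = Krylov A b l) :
    β (j + 1) = sSup {x : ℝ | ∃ w ∈ Krylov A b j, ‖w‖ = 1 ∧
      x = Metric.infDist (A w) (Krylov A b j : Set (EuclideanSpace ℝ (Fin d)))} := by
  set K := Krylov A b j with hK
  have hspanK : Submodule.span ℝ (v '' Set.Icc 1 j) = K := hspan j le_rfl
  -- norms of the v's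
  have hnorm : ∀ i : ℕ, 1 ≤ i → i ≤ j + 1 → ‖v i‖ = 1 := by
    intro i h1 h2
    have := horth i i h1 h2 h1 h2
    rw [if_pos rfl, real_inner_self_eq_norm_sq] at this
    nlinarith [norm_nonneg (v i)]
  -- basic memberships
  have hmemK : ∀ l : ℕ, 1 ≤ l → l ≤ j → v l ∈ K := by
    intro l h1 h2
    rw [← hspanK]
    exact Submodule.subset_span ⟨l, ⟨h1, h2⟩, rfl⟩
  -- v (j+1) is orthogonal to K
  have hperp : ∀ y ∈ K, ⟪y, v (j + 1)⟫ = 0 := by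
    intro y hy
    rw [← hspanK] at hy
    induction hy using Submodule.span_induction with
    | mem x hx =>
        obtain ⟨l, ⟨h1, h2⟩, rfl⟩ := hx
        have := horth l (j + 1) h1 (h2.trans (Nat.le_succ j)) (by omega) le_rfl
        rwa [if_neg (by omega)] at this
    | zero => simp
    | add x y _ _ hx hy => rw [inner_add_left, hx, hy]; ring
    | smul a x _ hx => rw [real_inner_smul_left, hx]; ring
  -- the "tail" of A (v j) lies in K
  have hkK : α j • v j + β j • v (j - 1) ∈ K := by
    apply K.add_mem (K.smul_mem _ (hmemK j hj le_rfl))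
    rcases Nat.lt_or_ge j 2 with h2 | h2
    · have : j = 1 := by omega
      subst this
      simp [hβ1]
    · exact K.smul_mem _ (hmemK (j - 1) (by omega) (by omega))
  have hAvj : A (v j) = β (j + 1) • v (j + 1) + (α j • v j + β j • v (j - 1)) := by
    rw [hrec j hj le_rfl]; abel
  -- the key invariance: for w ∈ K, A w - (β (j+1) * ⟪w, v j⟫) • v (j+1) ∈ K
  have hT : ∀ w ∈ K, A w - (β (j + 1) * ⟪w, v j⟫) • v (j + 1) ∈ K := by
    intro w hw
    rw [← hspanK] at hw
    induction hw using Submodule.span_induction with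
    | mem x hx =>
        obtain ⟨l, ⟨h1, h2⟩, rfl⟩ := hx
        rcases eq_or_lt_of_le h2 with rfl | hlt
        · have h11 : ⟪v l, v l⟫ = (1 : ℝ) := by
            have := horth l l h1 (h2.trans (Nat.le_succ _)) h1 (h2.trans (Nat.le_succ _))
            rwa [if_pos rfl] at this
          rw [h11, mul_one, hAvj]
          have : β (l + 1) • v (l + 1) + (α l • v l + β l • v (l - 1)) -
              β (l + 1) • v (l + 1) = α l • v l + β l • v (l - 1) := by abel
          rw [this]
          exact hkK
        · have h0 : ⟪v l, v j⟫ = (0 : ℝ) := by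
            have := horth l j h1 (by omega) hj (Nat.le_succ j)
            rwa [if_neg (by omega)] at this
          rw [h0, mul_zero, zero_smul, sub_zero, hrec l h1 (le_of_lt hlt)]
          apply K.add_mem (K.add_mem (K.smul_mem _ (hmemK (l + 1) (by omega) (by omega)))
            (K.smul_mem _ (hmemK l h1 (by omega))))
          rcases Nat.lt_or_ge l 2 with hl2 | hl2
          · have : l = 1 := by omega
            subst this
            simp [hv0]
          · exact K.smul_mem _ (hmemK (l - 1) (by omega) (by omega))
    | zero => simp only [map_zero, inner_zero_left, mul_zero, zero_smul, sub_zero]; exact K.zero_mem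
    | add x y hx' hy' hx hy =>
        have : A (x + y) - (β (j + 1) * ⟪x + y, v j⟫) • v (j + 1) =
            (A x - (β (j + 1) * ⟪x, v j⟫) • v (j + 1)) +
            (A y - (β (j + 1) * ⟪y, v j⟫) • v (j + 1)) := by
          rw [map_add, inner_add_left]
          rw [mul_add, add_smul]
          abel
        rw [this]
        exact K.add_mem hx hy
    | smul a x hx' hx =>
        have : A (a • x) - (β (j + 1) * ⟪a • x, v j⟫) • v (j + 1) =
            a • (A x - (β (j + 1) * ⟪x, v j⟫) • v (j + 1)) := by
          rw [map_smul, real_inner_smul_left, smul_sub, smul_smul]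
          ring_nf
        rw [this]
        exact K.smul_mem _ hx
  -- the attaining element: β (j+1) belongs to the set
  have hmem : β (j + 1) ∈ {x : ℝ | ∃ w ∈ K, ‖w‖ = 1 ∧
      x = Metric.infDist (A w) (K : Set (EuclideanSpace ℝ (Fin d)))} := by
    refine ⟨v j, hmemK j hj le_rfl, hnorm j hj (Nat.le_succ j), ?_⟩
    rw [hAvj, infDist_smul_add_aux K (v (j + 1)) (hnorm (j + 1) (by omega) le_rfl) hperp _ _ hkK,
      abs_of_nonneg (hβpos (j + 1))]
  -- the upper bound
  have hub : ∀ x ∈ {x : ℝ | ∃ w ∈ K, ‖w‖ = 1 ∧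
      x = Metric.infDist (A w) (K : Set (EuclideanSpace ℝ (Fin d)))}, x ≤ β (j + 1) := by
    rintro x ⟨w, hw, hw1, rfl⟩
    calc Metric.infDist (A w) (K : Set _)
        ≤ dist (A w) (A w - (β (j + 1) * ⟪w, v j⟫) • v (j + 1)) :=
          Metric.infDist_le_dist_of_mem (hT w hw)
      _ = ‖(β (j + 1) * ⟪w, v j⟫) • v (j + 1)‖ := by
          rw [dist_eq_norm]; congr 1; abel
      _ = β (j + 1) * |⟪w, v j⟫| := by
          rw [norm_smul, hnorm (j + 1) (by omega) le_rfl, mul_one, Real.norm_eq_abs,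
            abs_mul, abs_of_nonneg (hβpos (j + 1))]
      _ ≤ β (j + 1) * 1 := by
          apply mul_le_mul_of_nonneg_left _ (hβpos (j + 1))
          calc |⟪w, v j⟫| ≤ ‖w‖ * ‖v j‖ := abs_real_inner_le_norm _ _
            _ = 1 := by rw [hw1, hnorm j hj (Nat.le_succ j), mul_one]
      _ = β (j + 1) := mul_one _
  exact le_antisymm (le_csSup ⟨β (j + 1), hub⟩ hmem) (csSup_le ⟨_, hmem⟩ hub)
end

section
/- Let A be a symmetric d × d matrix, b nonzero, v_1 = b/‖b‖, and {β_j} the Lanczos coefficients. Then the product β_2 β_3 ⋯ β_{m+1} equals min over u ∈ K_m(A,b) of ‖A^m v_1 - u‖. -/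
open scoped RealInnerProductSpace

/-- The product `β_2 β_3 ⋯ β_{m+1}` of the Lanczos subdiagonal coefficients equals the
distance from `A^m v_1` to the Krylov subspace `K_m(A,b)`. -/
theorem stmt10 {d : ℕ}
    (A : EuclideanSpace ℝ (Fin d) →ₗ[ℝ] EuclideanSpace ℝ (Fin d))
    (hsym : ∀ x y, ⟪A x, y⟫ = ⟪x, A y⟫)
    (b : EuclideanSpace ℝ (Fin d)) (hb : b ≠ 0)
    (v : ℕ → EuclideanSpace ℝ (Fin d)) (α β : ℕ → ℝ) (m : ℕ) (hm : 1 ≤ m)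
    (hv0 : v 0 = 0) (hβ1 : β 1 = 0) (hv1 : v 1 = ‖b‖⁻¹ • b)
    (hβpos : ∀ l : ℕ, 0 ≤ β l)
    (horth : ∀ i k : ℕ, 1 ≤ i → i ≤ m + 1 → 1 ≤ k → k ≤ m + 1 →
      ⟪v i, v k⟫ = if i = k then 1 else 0)
    (hrec : ∀ l : ℕ, 1 ≤ l → l ≤ m →
      A (v l) = β (l + 1) • v (l + 1) + α l • v l + β l • v (l - 1))
    (hspan : ∀ l : ℕ, l ≤ m →
      Submodule.span ℝ (v '' Set.Icc 1 l) = Krylov A b l) :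
    ∏ l ∈ Finset.Icc 2 (m + 1), β l
      = Metric.infDist ((A ^ m) (v 1))
          (Krylov A b m : Set (EuclideanSpace ℝ (Fin d))) := by
  classical
  set W : ℕ → Submodule ℝ (EuclideanSpace ℝ (Fin d)) :=
    fun k => Submodule.span ℝ (v '' Set.Icc 1 k) with hWdef
  have hmem : ∀ j k : ℕ, 1 ≤ j → j ≤ k → v j ∈ W k := fun j k h1 h2 =>
    Submodule.subset_span ⟨j, ⟨h1, h2⟩, rfl⟩
  -- A maps W k into W (k+1) for k+1 ≤ m
  have hmap : ∀ k : ℕ, k + 1 ≤ m → ∀ x ∈ W k, A x ∈ W (k + 1) := by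
    intro k hk x hx
    induction hx using Submodule.span_induction with
    | mem y hy =>
      obtain ⟨j, hj, rfl⟩ := hy
      have hj1 := hj.1; have hj2 := hj.2
      rw [hrec j hj1 (by omega)]
      refine Submodule.add_mem _ (Submodule.add_mem _
        (Submodule.smul_mem _ _ (hmem _ _ (by omega) (by omega)))
        (Submodule.smul_mem _ _ (hmem _ _ (by omega) (by omega)))) ?_
      rcases Nat.eq_or_lt_of_le hj1 with h1 | h1
      · rw [← h1]
        simp [hv0]
      · exact Submodule.smul_mem _ _ (hmem _ _ (by omega) (by omega))
    | zero => simp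
    | add a b ha hb iha ihb => rw [map_add]; exact Submodule.add_mem _ iha ihb
    | smul r a ha ih => rw [map_smul]; exact Submodule.smul_mem _ _ ih
  -- main induction
  have key : ∀ k : ℕ, k ≤ m →
      (A ^ k) (v 1) - (∏ l ∈ Finset.Icc 2 (k + 1), β l) • v (k + 1) ∈ W k := by
    intro k
    induction k with
    | zero =>
      intro _
      have : Finset.Icc 2 1 = (∅ : Finset ℕ) := Finset.Icc_eq_empty (by omega)
      simp [this]
    | succ k ih =>
      intro hk
      have hw := ih (by omega)
      set ck := ∏ l ∈ Finset.Icc 2 (k + 1), β l with hck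
      have hAv := hrec (k + 1) (by omega) hk
      simp only [Nat.add_sub_cancel] at hAv
      have hexp : (A ^ (k + 1)) (v 1)
          = A ((A ^ k) (v 1) - ck • v (k + 1))
            + ck • (β (k + 2) • v (k + 2) + α (k + 1) • v (k + 1) + β (k + 1) • v k) := by
        rw [pow_succ', Module.End.mul_apply, map_sub, map_smul, hAv]
        abel
      have hprod : ∏ l ∈ Finset.Icc 2 (k + 1 + 1), β l = ck * β (k + 2) :=
        Finset.prod_Icc_succ_top (by omega) _
      have hiden : (A ^ (k + 1)) (v 1) - (ck * β (k + 2)) • v (k + 1 + 1)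
          = A ((A ^ k) (v 1) - ck • v (k + 1))
            + ((ck * α (k + 1)) • v (k + 1) + (ck * β (k + 1)) • v k) := by
        rw [hexp]
        simp only [smul_add, mul_smul]
        abel
      rw [hprod, hiden]
      refine Submodule.add_mem _ (hmap k hk _ hw) (Submodule.add_mem _
        (Submodule.smul_mem _ _ (hmem _ _ (by omega) (by omega))) ?_)
      rcases Nat.eq_zero_or_pos k with h0 | h0
      · subst h0; simp [hv0]
      · exact Submodule.smul_mem _ _ (hmem _ _ (by omega) (by omega))
  set c : ℝ := ∏ l ∈ Finset.Icc 2 (m + 1), β l with hc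
  have hWK : W m = Krylov A b m := hspan m le_rfl
  have hw : (A ^ m) (v 1) - c • v (m + 1) ∈ Krylov A b m := hWK ▸ key m le_rfl
  set x := (A ^ m) (v 1) with hxdef
  set w := x - c • v (m + 1) with hwdef
  have hvnorm : ‖v (m + 1)‖ = 1 := by
    have h1 := horth (m + 1) (m + 1) (by omega) le_rfl (by omega) le_rfl
    rw [if_pos rfl] at h1
    have h2 : ‖v (m + 1)‖ ^ 2 = 1 := by
      rw [← real_inner_self_eq_norm_sq, h1]
    nlinarith [norm_nonneg (v (m + 1))]
  have hperp : ∀ z ∈ Krylov A b m, ⟪v (m + 1), z⟫ = 0 := by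
    intro z hz
    rw [← hWK] at hz
    induction hz using Submodule.span_induction with
    | mem y hy =>
      obtain ⟨j, hj, rfl⟩ := hy
      have hj1 := hj.1; have hj2 := hj.2
      rw [horth (m + 1) j (by omega) le_rfl hj1 (by omega), if_neg (by omega)]
    | zero => simp
    | add a b ha hb iha ihb => rw [inner_add_right, iha, ihb]; ring
    | smul r a ha ih => rw [real_inner_smul_right, ih]; ring
  have hcnn : 0 ≤ c := Finset.prod_nonneg fun l _ => hβpos l
  have hx : x = c • v (m + 1) + w := by rw [hwdef]; abel
  refine le_antisymm ?_ ?_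
  · have hne : Nonempty (Krylov A b m : Set (EuclideanSpace ℝ (Fin d))) :=
      ⟨⟨0, Submodule.zero_mem _⟩⟩
    rw [Metric.infDist_eq_iInf]
    refine le_ciInf fun u0 => ?_
    obtain ⟨u, hu⟩ := u0
    have hz : w - u ∈ Krylov A b m := Submodule.sub_mem _ hw hu
    have hip : ⟪c • v (m + 1), w - u⟫ = 0 := by
      rw [real_inner_smul_left, hperp _ hz]; ring
    have hxu : x - u = c • v (m + 1) + (w - u) := by rw [hx]; abel
    have hsq : ‖x - u‖ ^ 2 = ‖c • v (m + 1)‖ ^ 2 + ‖w - u‖ ^ 2 := by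
      rw [hxu, norm_add_sq_real, hip]; ring
    have hcv : ‖c • v (m + 1)‖ = c := by
      rw [norm_smul, Real.norm_eq_abs, abs_of_nonneg hcnn, hvnorm, mul_one]
    rw [dist_eq_norm]
    nlinarith [norm_nonneg (x - u), norm_nonneg (w - u), sq_nonneg (‖w - u‖)]
  · have h1 : Metric.infDist x (Krylov A b m : Set (EuclideanSpace ℝ (Fin d)))
        ≤ dist x w := Metric.infDist_le_dist_of_mem hw
    calc Metric.infDist x (Krylov A b m : Set (EuclideanSpace ℝ (Fin d))) ≤ dist x w := h1
      _ = c := by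
        rw [dist_eq_norm, hwdef]
        simp only [sub_sub_cancel]
        rw [norm_smul, Real.norm_eq_abs, abs_of_nonneg hcnn, hvnorm, mul_one]
end

section
/- Let A ∈ ℝ^{d×d} be symmetric positive semidefinite, b ∈ ℝ^d nonzero, and for j = 1, ..., m let P^(j) be the orthogonal projection onto the Krylov subspace K_j(A,b). Define ρ^(m)(A,b) = (∏_{j=1}^m σ^(j)(A,b))^{1/m} where σ^(j)(A,b) = max_{w ∈ K_j(A,b), ‖w‖=1} dist(Aw, K_j(A,b)). Then for all s ∈ ℝ^d, min_{1 ≤ j ≤ m} { (P^(j)s)ᵀ A (P^(j)s) - sᵀ A s } ≤ (2 ρ^(m)(A,b) / m) ‖s‖². -/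
open scoped RealInnerProductSpace

/-- `σ^(j)(A,b) = sup { dist(Aw, K_j(A,b)) : w ∈ K_j(A,b), ‖w‖ = 1 }`. -/
noncomputable def sigma' {d : ℕ}
    (A : EuclideanSpace ℝ (Fin d) →ₗ[ℝ] EuclideanSpace ℝ (Fin d))
    (b : EuclideanSpace ℝ (Fin d)) (j : ℕ) : ℝ :=
  sSup {x : ℝ | ∃ w ∈ Krylov A b j, ‖w‖ = 1 ∧
    x = Metric.infDist (A w) (Krylov A b j : Set (EuclideanSpace ℝ (Fin d)))}

variable {d : ℕ} (A : EuclideanSpace ℝ (Fin d) →ₗ[ℝ] EuclideanSpace ℝ (Fin d))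
  (b : EuclideanSpace ℝ (Fin d))

lemma Krylov_mono (j : ℕ) : Krylov A b j ≤ Krylov A b (j + 1) :=
  Submodule.span_mono (Set.image_mono (fun x hx => lt_trans hx (Nat.lt_succ_self j)))

lemma Krylov_zero : Krylov A b 0 = ⊥ := by
  have : Set.Iio (0 : ℕ) = ∅ := by ext x; simp
  simp [Krylov, this]

lemma Krylov_mapsTo {j : ℕ} {x : EuclideanSpace ℝ (Fin d)} (hx : x ∈ Krylov A b j) :
    A x ∈ Krylov A b (j + 1) := by
  induction hx using Submodule.span_induction with
  | mem y hy =>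
    obtain ⟨i, hi, rfl⟩ := hy
    apply Submodule.subset_span
    refine ⟨i + 1, ?_, ?_⟩
    · exact Nat.succ_lt_succ hi
    · simp [pow_succ']
  | zero => simp
  | add y z _ _ hy hz => rw [map_add]; exact Submodule.add_mem _ hy hz
  | smul c y _ hy => rw [map_smul]; exact Submodule.smul_mem _ c hy

/-- minimality of orthogonal projection -/
lemma proj_min (K : Submodule ℝ (EuclideanSpace ℝ (Fin d))) (x y : EuclideanSpace ℝ (Fin d))
    (hy : y ∈ K) : ‖x - (Submodule.orthogonalProjectionOnto K x : EuclideanSpace ℝ (Fin d))‖ ≤ ‖x - y‖ := by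
  set p : EuclideanSpace ℝ (Fin d) := (Submodule.orthogonalProjectionOnto K x : EuclideanSpace ℝ (Fin d)) with hp
  have horth : x - p ∈ Kᗮ := Submodule.sub_starProjection_mem_orthogonal (K := K) x
  have hmem : p - y ∈ K := Submodule.sub_mem _ (Submodule.orthogonalProjectionOnto K x).2 hy
  have hinner : ⟪x - p, p - y⟫ = 0 :=
    Submodule.inner_left_of_mem_orthogonal hmem horth
  have hdecomp : x - y = (x - p) + (p - y) := by abel
  have hsq : ‖x - y‖ ^ 2 = ‖x - p‖ ^ 2 + ‖p - y‖ ^ 2 := by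
    rw [hdecomp, norm_add_sq_real, hinner]; ring
  nlinarith [norm_nonneg (x - y), norm_nonneg (x - p), norm_nonneg (p - y)]

lemma sigma'_nonneg (j : ℕ) : 0 ≤ sigma' A b j := by
  apply Real.sSup_nonneg
  rintro x ⟨w, _, _, rfl⟩
  exact Metric.infDist_nonneg

lemma sigma'_bddAbove (j : ℕ) :
    BddAbove {x : ℝ | ∃ w ∈ Krylov A b j, ‖w‖ = 1 ∧
      x = Metric.infDist (A w) (Krylov A b j : Set (EuclideanSpace ℝ (Fin d)))} := by
  refine ⟨‖LinearMap.toContinuousLinearMap A‖, ?_⟩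
  rintro x ⟨w, _, hw1, rfl⟩
  have h0 : (0 : EuclideanSpace ℝ (Fin d)) ∈ (Krylov A b j : Set (EuclideanSpace ℝ (Fin d))) :=
    (Krylov A b j).zero_mem
  calc Metric.infDist (A w) (Krylov A b j : Set (EuclideanSpace ℝ (Fin d)))
      ≤ dist (A w) 0 := Metric.infDist_le_dist_of_mem h0
    _ = ‖A w‖ := by simp
    _ = ‖LinearMap.toContinuousLinearMap A w‖ := rfl
    _ ≤ ‖LinearMap.toContinuousLinearMap A‖ * ‖w‖ :=
        (LinearMap.toContinuousLinearMap A).le_opNorm w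
    _ = ‖LinearMap.toContinuousLinearMap A‖ := by rw [hw1, mul_one]

/-- key property: residual of `A w` past `K_j` is at most `σ_j ‖w‖` for `w ∈ K_j`. -/
lemma sigma'_bound (j : ℕ) (w : EuclideanSpace ℝ (Fin d)) (hw : w ∈ Krylov A b j) :
    ‖A w - (Submodule.orthogonalProjectionOnto (Krylov A b j) (A w) : EuclideanSpace ℝ (Fin d))‖
      ≤ sigma' A b j * ‖w‖ := by
  rcases eq_or_ne w 0 with rfl | hw0
  · simp
  · set K := Krylov A b j
    set u : EuclideanSpace ℝ (Fin d) := ‖w‖⁻¹ • w with hu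
    have hnw : (0:ℝ) < ‖w‖ := norm_pos_iff.mpr hw0
    have hu1 : ‖u‖ = 1 := by
      rw [hu, norm_smul, norm_inv, norm_norm, inv_mul_cancel₀ (ne_of_gt hnw)]
    have huK : u ∈ K := K.smul_mem _ hw
    have hmem : Metric.infDist (A u) (K : Set (EuclideanSpace ℝ (Fin d)))
        ∈ {x : ℝ | ∃ w ∈ Krylov A b j, ‖w‖ = 1 ∧
          x = Metric.infDist (A w) (Krylov A b j : Set (EuclideanSpace ℝ (Fin d)))} :=
      ⟨u, huK, hu1, rfl⟩
    have hle : Metric.infDist (A u) (K : Set (EuclideanSpace ℝ (Fin d))) ≤ sigma' A b j :=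
      le_csSup (sigma'_bddAbove A b j) hmem
    have hproj_le : ‖A u - (Submodule.orthogonalProjectionOnto K (A u) : EuclideanSpace ℝ (Fin d))‖
        ≤ Metric.infDist (A u) (K : Set (EuclideanSpace ℝ (Fin d))) := by
      rw [Metric.infDist_eq_iInf]
      have : Nonempty (K : Set (EuclideanSpace ℝ (Fin d))) := ⟨0, K.zero_mem⟩
      apply le_ciInf
      intro y
      rw [dist_eq_norm]
      exact proj_min K (A u) y y.2
    have hscale : A u - (Submodule.orthogonalProjectionOnto K (A u) : EuclideanSpace ℝ (Fin d))
        = ‖w‖⁻¹ • (A w - (Submodule.orthogonalProjectionOnto K (A w) : EuclideanSpace ℝ (Fin d))) := by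
      rw [hu, map_smul, map_smul, smul_sub]
      norm_cast
    have : ‖w‖⁻¹ * ‖A w - (Submodule.orthogonalProjectionOnto K (A w) : EuclideanSpace ℝ (Fin d))‖
        ≤ sigma' A b j := by
      calc ‖w‖⁻¹ * ‖A w - (Submodule.orthogonalProjectionOnto K (A w) : EuclideanSpace ℝ (Fin d))‖
          = ‖A u - (Submodule.orthogonalProjectionOnto K (A u) : EuclideanSpace ℝ (Fin d))‖ := by
            rw [hscale, norm_smul, norm_inv, norm_norm]
        _ ≤ _ := le_trans hproj_le hle
    calc ‖A w - (Submodule.orthogonalProjectionOnto K (A w) : EuclideanSpace ℝ (Fin d))‖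
        = ‖w‖ * (‖w‖⁻¹ * ‖A w - (Submodule.orthogonalProjectionOnto K (A w) : EuclideanSpace ℝ (Fin d))‖) := by
          field_simp
      _ ≤ ‖w‖ * sigma' A b j := by
          exact mul_le_mul_of_nonneg_left this (le_of_lt hnw)
      _ = sigma' A b j * ‖w‖ := mul_comm _ _

section main
variable (s : EuclideanSpace ℝ (Fin d))

/-- abbreviation for the projection of `s` onto `K_j`. -/
noncomputable def pj (j : ℕ) : EuclideanSpace ℝ (Fin d) :=
  (Submodule.orthogonalProjectionOnto (Krylov A b j) s : EuclideanSpace ℝ (Fin d))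

lemma pj_zero : pj A b s 0 = 0 := by
  have h : pj A b s 0 ∈ Krylov A b 0 := (Submodule.orthogonalProjectionOnto _ s).2
  rw [Krylov_zero] at h
  exact (Submodule.mem_bot ℝ).mp h

lemma pj_mem (j : ℕ) : pj A b s j ∈ Krylov A b j := (Submodule.orthogonalProjectionOnto _ s).2

lemma sub_pj_orth (j : ℕ) : s - pj A b s j ∈ (Krylov A b j)ᗮ :=
  Submodule.sub_starProjection_mem_orthogonal (K := Krylov A b j) s

/-- successive differences are orthogonal to the earlier Krylov spaces. -/
lemma wj_orth (j : ℕ) : pj A b s (j + 1) - pj A b s j ∈ (Krylov A b j)ᗮ := by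
  have h1 : s - pj A b s j ∈ (Krylov A b j)ᗮ := sub_pj_orth A b s j
  have h2 : s - pj A b s (j + 1) ∈ (Krylov A b j)ᗮ :=
    Submodule.orthogonal_le (Krylov_mono A b j) (sub_pj_orth A b s (j + 1))
  have : (s - pj A b s j) - (s - pj A b s (j + 1)) ∈ (Krylov A b j)ᗮ :=
    Submodule.sub_mem _ h1 h2
  simpa using this

lemma pj_norm_sq_succ (j : ℕ) :
    ‖pj A b s (j + 1)‖ ^ 2 = ‖pj A b s j‖ ^ 2 + ‖pj A b s (j + 1) - pj A b s j‖ ^ 2 := by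
  have hinner : ⟪pj A b s j, pj A b s (j + 1) - pj A b s j⟫ = 0 :=
    Submodule.inner_right_of_mem_orthogonal (pj_mem A b s j) (wj_orth A b s j)
  have hdecomp : pj A b s (j + 1) = pj A b s j + (pj A b s (j + 1) - pj A b s j) := by abel
  conv_lhs => rw [hdecomp]
  rw [norm_add_sq_real, hinner]
  ring

lemma sum_wj_sq (M : ℕ) :
    ∑ n ∈ Finset.range M, ‖pj A b s (n + 1) - pj A b s n‖ ^ 2 = ‖pj A b s M‖ ^ 2 := by
  induction M with
  | zero => simp [pj_zero]
  | succ M ih => rw [Finset.sum_range_succ, ih, pj_norm_sq_succ]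

lemma pj_norm_le (M : ℕ) : ‖pj A b s M‖ ≤ ‖s‖ := by
  have h : ‖(Submodule.orthogonalProjectionOnto (Krylov A b M)) s‖ ≤ ‖s‖ := by
    calc ‖(Submodule.orthogonalProjectionOnto (Krylov A b M)) s‖
        ≤ ‖(Submodule.orthogonalProjectionOnto (Krylov A b M) : EuclideanSpace ℝ (Fin d) →L[ℝ] _)‖ * ‖s‖ :=
          ContinuousLinearMap.le_opNorm _ s
      _ ≤ 1 * ‖s‖ := by
          apply mul_le_mul_of_nonneg_right (Submodule.orthogonalProjectionOnto_norm_le _) (norm_nonneg s)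
      _ = ‖s‖ := one_mul _
  simpa [pj] using h

end main

lemma step_bound (hsym : ∀ x y, ⟪A x, y⟫ = ⟪x, A y⟫)
    (hpsd : ∀ x, 0 ≤ ⟪x, A x⟫) (s : EuclideanSpace ℝ (Fin d)) (n : ℕ) :
    ⟪pj A b s (n + 1), A (pj A b s (n + 1))⟫ - ⟪s, A s⟫
      ≤ 2 * (sigma' A b (n + 1) *
          (‖pj A b s (n + 1) - pj A b s n‖ * ‖pj A b s (n + 2) - pj A b s (n + 1)‖)) := by
  set p : EuclideanSpace ℝ (Fin d) := pj A b s (n + 1) with hp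
  set r : EuclideanSpace ℝ (Fin d) := s - p with hr
  set w1 : EuclideanSpace ℝ (Fin d) := pj A b s (n + 1) - pj A b s n with hw1
  set w2 : EuclideanSpace ℝ (Fin d) := pj A b s (n + 2) - pj A b s (n + 1) with hw2
  -- the algebraic identity
  have hAp_r : ⟪A p, r⟫ = ⟪p, A s⟫ - ⟪p, A p⟫ := by
    rw [hr, inner_sub_right, hsym p s, hsym p p]
  have hsAp : ⟪s, A p⟫ = ⟪p, A s⟫ := by
    rw [← hsym s p, real_inner_comm]
  have hrAr : ⟪r, A r⟫ = ⟪s, A s⟫ - 2 * ⟪p, A s⟫ + ⟪p, A p⟫ := by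
    rw [hr, map_sub, inner_sub_left, inner_sub_right, inner_sub_right, hsAp]
    ring
  have hid : ⟪p, A p⟫ - ⟪s, A s⟫ = -(2 * ⟪A p, r⟫ + ⟪r, A r⟫) := by
    rw [hAp_r, hrAr]; ring
  have hD : ⟪p, A p⟫ - ⟪s, A s⟫ ≤ 2 * |⟪A p, r⟫| := by
    rw [hid]
    have h1 := hpsd r
    have h2 : -⟪A p, r⟫ ≤ |⟪A p, r⟫| := neg_le_abs _
    linarith
  -- rewrite the inner product
  have hApK : A p ∈ Krylov A b (n + 2) := Krylov_mapsTo A b (pj_mem A b s (n + 1))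
  have hr_w2 : r - w2 = s - pj A b s (n + 2) := by rw [hr, hw2]; abel
  have h1 : ⟪A p, r - w2⟫ = 0 := by
    rw [hr_w2]
    exact Submodule.inner_right_of_mem_orthogonal hApK (sub_pj_orth A b s (n + 2))
  have hApr : ⟪A p, r⟫ = ⟪A p, w2⟫ := by
    have := inner_sub_right (𝕜 := ℝ) (A p) r w2
    rw [h1] at this
    linarith
  set z : EuclideanSpace ℝ (Fin d) :=
    (Submodule.orthogonalProjectionOnto (Krylov A b (n + 1)) (A p) : EuclideanSpace ℝ (Fin d)) with hz
  have hzw2 : ⟪z, w2⟫ = 0 :=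
    Submodule.inner_right_of_mem_orthogonal (Submodule.orthogonalProjectionOnto _ (A p)).2
      (wj_orth A b s (n + 1))
  have hApw2 : ⟪A p, w2⟫ = ⟪A p - z, w2⟫ := by
    rw [inner_sub_left, hzw2]; ring
  -- the norm bound
  have hw1K : w1 ∈ Krylov A b (n + 1) :=
    Submodule.sub_mem _ (pj_mem A b s (n + 1)) (Krylov_mono A b n (pj_mem A b s n))
  have hApnK : A (pj A b s n) ∈ Krylov A b (n + 1) := Krylov_mapsTo A b (pj_mem A b s n)
  have hzbound : ‖A p - z‖ ≤ sigma' A b (n + 1) * ‖w1‖ := by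
    set y : EuclideanSpace ℝ (Fin d) := A (pj A b s n) +
      (Submodule.orthogonalProjectionOnto (Krylov A b (n + 1)) (A w1) : EuclideanSpace ℝ (Fin d)) with hy
    have hyK : y ∈ Krylov A b (n + 1) :=
      Submodule.add_mem _ hApnK (Submodule.orthogonalProjectionOnto _ (A w1)).2
    have hmin : ‖A p - z‖ ≤ ‖A p - y‖ := proj_min _ (A p) y hyK
    have hp_eq : p = pj A b s n + w1 := by rw [hw1, hp]; abel
    have hApy : A p - y
        = A w1 - (Submodule.orthogonalProjectionOnto (Krylov A b (n + 1)) (A w1) :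
            EuclideanSpace ℝ (Fin d)) := by
      rw [hy]
      conv_lhs => rw [hp_eq, map_add]
      abel
    rw [hApy] at hmin
    exact le_trans hmin (sigma'_bound A b (n + 1) w1 hw1K)
  -- combine
  calc ⟪p, A p⟫ - ⟪s, A s⟫ ≤ 2 * |⟪A p, r⟫| := hD
    _ = 2 * |⟪A p - z, w2⟫| := by rw [hApr, hApw2]
    _ ≤ 2 * (‖A p - z‖ * ‖w2‖) := by
        have := abs_real_inner_le_norm (A p - z) w2
        linarith
    _ ≤ 2 * (sigma' A b (n + 1) * ‖w1‖ * ‖w2‖) := by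
        have := mul_le_mul_of_nonneg_right hzbound (norm_nonneg w2)
        linarith
    _ = 2 * (sigma' A b (n + 1) * (‖w1‖ * ‖w2‖)) := by ring

/-- For a symmetric PSD `A` and `b ≠ 0` with non-degenerate Krylov subspaces, letting
`P^(j)` be the orthogonal projection onto `K_j(A,b)` and
`ρ^(m)(A,b) = (∏_{j=1}^m σ^(j)(A,b))^{1/m}`, for every `s` there is a `j ∈ {1, ..., m}` with
`⟪P^(j)s, A P^(j)s⟫ - ⟪s, A s⟫ ≤ (2 ρ^(m)(A,b) / m) ‖s‖²`. -/
theorem stmt11 {d : ℕ}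
    (A : EuclideanSpace ℝ (Fin d) →ₗ[ℝ] EuclideanSpace ℝ (Fin d))
    (hsym : ∀ x y, ⟪A x, y⟫ = ⟪x, A y⟫)
    (hpsd : ∀ x, 0 ≤ ⟪x, A x⟫)
    (b : EuclideanSpace ℝ (Fin d)) (hb : b ≠ 0)
    (m : ℕ) (hm : 1 ≤ m)
    (hdim : ∀ j : ℕ, j ≤ m → Module.finrank ℝ (Krylov A b j) = j)
    (s : EuclideanSpace ℝ (Fin d)) :
    ∃ j : ℕ, 1 ≤ j ∧ j ≤ m ∧
      ⟪(Submodule.orthogonalProjectionOnto (Krylov A b j) s : EuclideanSpace ℝ (Fin d)),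
          A (Submodule.orthogonalProjectionOnto (Krylov A b j) s : EuclideanSpace ℝ (Fin d))⟫
        - ⟪s, A s⟫
        ≤ 2 * ((∏ i ∈ Finset.Icc 1 m, sigma' A b i) ^ ((1 : ℝ) / m)) / m * ‖s‖ ^ 2 := by
  have hm0 : (0 : ℝ) < m := by exact_mod_cast hm
  set c : ℕ → ℝ := fun n => ‖pj A b s (n + 1) - pj A b s n‖ with hc
  set g : ℕ → ℝ := fun n => sigma' A b (n + 1) * (c n * c (n + 1)) with hg
  have hc_nonneg : ∀ n, 0 ≤ c n := fun n => norm_nonneg _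
  have hg_nonneg : ∀ n, 0 ≤ g n := fun n =>
    mul_nonneg (sigma'_nonneg A b _) (mul_nonneg (hc_nonneg n) (hc_nonneg (n + 1)))
  -- pick the minimizing index
  obtain ⟨n₀, hn₀, hmin⟩ := Finset.exists_min_image (Finset.range m) g
    ⟨0, Finset.mem_range.mpr hm⟩
  have hn₀m : n₀ < m := Finset.mem_range.mp hn₀
  -- power bound
  have hpow : g n₀ ^ m ≤ ∏ n ∈ Finset.range m, g n := by
    calc g n₀ ^ m = ∏ _n ∈ Finset.range m, g n₀ := by
          rw [Finset.prod_const, Finset.card_range]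
      _ ≤ ∏ n ∈ Finset.range m, g n :=
          Finset.prod_le_prod (fun i _ => hg_nonneg n₀) (fun i hi => hmin i hi)
  -- sum bound on the c's
  have hsum1 : ∑ n ∈ Finset.range m, c n ^ 2 ≤ ‖s‖ ^ 2 := by
    rw [hc]
    simp only
    rw [sum_wj_sq A b s m]
    have := pj_norm_le A b s m
    nlinarith [norm_nonneg (pj A b s m)]
  have hsum2 : ∑ n ∈ Finset.range m, c (n + 1) ^ 2 ≤ ‖s‖ ^ 2 := by
    have h1 : ∑ n ∈ Finset.range (m + 1), c n ^ 2
        = (∑ n ∈ Finset.range m, c (n + 1) ^ 2) + c 0 ^ 2 :=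
      Finset.sum_range_succ' (fun n => c n ^ 2) m
    have h2 : ∑ n ∈ Finset.range (m + 1), c n ^ 2 ≤ ‖s‖ ^ 2 := by
      rw [hc]
      simp only
      rw [sum_wj_sq A b s (m + 1)]
      have := pj_norm_le A b s (m + 1)
      nlinarith [norm_nonneg (pj A b s (m + 1))]
    nlinarith [sq_nonneg (c 0)]
  have hccsum : ∑ n ∈ Finset.range m, c n * c (n + 1) ≤ ‖s‖ ^ 2 := by
    have h1 : ∀ n, c n * c (n + 1) ≤ (c n ^ 2 + c (n + 1) ^ 2) / 2 := by
      intro n; nlinarith [sq_nonneg (c n - c (n + 1))]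
    calc ∑ n ∈ Finset.range m, c n * c (n + 1)
        ≤ ∑ n ∈ Finset.range m, (c n ^ 2 + c (n + 1) ^ 2) / 2 :=
          Finset.sum_le_sum (fun i _ => h1 i)
      _ = ((∑ n ∈ Finset.range m, c n ^ 2) + ∑ n ∈ Finset.range m, c (n + 1) ^ 2) / 2 := by
          rw [← Finset.sum_add_distrib]; rw [← Finset.sum_div]
      _ ≤ ‖s‖ ^ 2 := by linarith
  -- AM-GM
  have hcc_prod : (∏ n ∈ Finset.range m, c n * c (n + 1)) ^ ((1 : ℝ) / m) ≤ ‖s‖ ^ 2 / m := by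
    have hnn : ∀ n ∈ Finset.range m, 0 ≤ c n * c (n + 1) :=
      fun n _ => mul_nonneg (hc_nonneg n) (hc_nonneg (n + 1))
    calc (∏ n ∈ Finset.range m, c n * c (n + 1)) ^ ((1 : ℝ) / m)
        = ∏ n ∈ Finset.range m, (c n * c (n + 1)) ^ ((1 : ℝ) / m) :=
          (Real.finset_prod_rpow _ _ hnn _).symm
      _ ≤ ∑ n ∈ Finset.range m, (1 / m : ℝ) * (c n * c (n + 1)) := by
          apply Real.geom_mean_le_arith_mean_weighted
          · intro i _; positivity
          · rw [Finset.sum_const, Finset.card_range, nsmul_eq_mul]; field_simp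
          · exact hnn
      _ = (∑ n ∈ Finset.range m, c n * c (n + 1)) / m := by
          rw [← Finset.mul_sum]; ring
      _ ≤ ‖s‖ ^ 2 / m := by
          gcongr
  -- reindex the sigma product
  have hreindex : ∏ n ∈ Finset.range m, sigma' A b (n + 1)
      = ∏ i ∈ Finset.Icc 1 m, sigma' A b i := by
    rw [← Finset.Ico_add_one_right_eq_Icc, Finset.prod_Ico_eq_prod_range]
    have hm1 : m + 1 - 1 = m := by omega
    rw [hm1]
    exact Finset.prod_congr rfl (fun i _ => by rw [add_comm])
  have hσprod_nonneg : 0 ≤ ∏ n ∈ Finset.range m, sigma' A b (n + 1) :=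
    Finset.prod_nonneg (fun i _ => sigma'_nonneg A b _)
  have hccprod_nonneg : 0 ≤ ∏ n ∈ Finset.range m, c n * c (n + 1) :=
    Finset.prod_nonneg (fun n _ => mul_nonneg (hc_nonneg n) (hc_nonneg (n + 1)))
  -- main estimate on g n₀
  have hgn₀ : g n₀ ≤ (∏ i ∈ Finset.Icc 1 m, sigma' A b i) ^ ((1 : ℝ) / m) * (‖s‖ ^ 2 / m) := by
    have e1 : ((g n₀ ^ m : ℝ)) ^ ((1 : ℝ) / m) = g n₀ := by
      rw [← Real.rpow_natCast (g n₀) m, ← Real.rpow_mul (hg_nonneg n₀),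
        mul_one_div_cancel (ne_of_gt hm0), Real.rpow_one]
    calc g n₀ = ((g n₀ ^ m : ℝ)) ^ ((1 : ℝ) / m) := e1.symm
      _ ≤ (∏ n ∈ Finset.range m, g n) ^ ((1 : ℝ) / m) :=
          Real.rpow_le_rpow (pow_nonneg (hg_nonneg n₀) m) hpow (by positivity)
      _ = ((∏ n ∈ Finset.range m, sigma' A b (n + 1))
            * ∏ n ∈ Finset.range m, c n * c (n + 1)) ^ ((1 : ℝ) / m) := by
          rw [hg]; rw [← Finset.prod_mul_distrib]
      _ = (∏ n ∈ Finset.range m, sigma' A b (n + 1)) ^ ((1 : ℝ) / m)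
            * (∏ n ∈ Finset.range m, c n * c (n + 1)) ^ ((1 : ℝ) / m) :=
          Real.mul_rpow hσprod_nonneg hccprod_nonneg
      _ ≤ (∏ n ∈ Finset.range m, sigma' A b (n + 1)) ^ ((1 : ℝ) / m) * (‖s‖ ^ 2 / m) :=
          mul_le_mul_of_nonneg_left hcc_prod (Real.rpow_nonneg hσprod_nonneg _)
      _ = (∏ i ∈ Finset.Icc 1 m, sigma' A b i) ^ ((1 : ℝ) / m) * (‖s‖ ^ 2 / m) := by
          rw [hreindex]
  -- conclude
  refine ⟨n₀ + 1, Nat.le_add_left 1 n₀, hn₀m, ?_⟩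
  have hstep := step_bound A b hsym hpsd s n₀
  have hfinal : ⟪pj A b s (n₀ + 1), A (pj A b s (n₀ + 1))⟫ - ⟪s, A s⟫
      ≤ 2 * ((∏ i ∈ Finset.Icc 1 m, sigma' A b i) ^ ((1 : ℝ) / m)) / m * ‖s‖ ^ 2 := by
    calc ⟪pj A b s (n₀ + 1), A (pj A b s (n₀ + 1))⟫ - ⟪s, A s⟫
        ≤ 2 * g n₀ := hstep
      _ ≤ 2 * ((∏ i ∈ Finset.Icc 1 m, sigma' A b i) ^ ((1 : ℝ) / m) * (‖s‖ ^ 2 / m)) := by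
          linarith
      _ = 2 * ((∏ i ∈ Finset.Icc 1 m, sigma' A b i) ^ ((1 : ℝ) / m)) / m * ‖s‖ ^ 2 := by
          ring
  exact hfinal
end

section
/- For a symmetric matrix A ∈ ℝ^{d×d} and nonzero b ∈ ℝ^d, the quantity ρ^(m)(A,b) = (∏_{j=1}^m β_{j+1})^{1/m} (the geometric mean of the Lanczos subdiagonal coefficients) satisfies ρ^(m)(A,b) = min over monic polynomials p of degree m of ‖p(A) b / ‖b‖‖^{1/m}. -/
open scoped RealInnerProductSpace

open Polynomial

/-- Pairs `(q_{n-1}, q_n)` of Lanczos characteristic polynomials (with a dummy `0` at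
index `-1`). -/
noncomputable def lancPair (α β : ℕ → ℝ) : ℕ → Polynomial ℝ × Polynomial ℝ
  | 0 => (0, 1)
  | n + 1 =>
    ((lancPair α β n).2,
      (X - C (α (n + 1))) * (lancPair α β n).2 - C ((β (n + 1)) ^ 2) * (lancPair α β n).1)

lemma lancPair_deg (α β : ℕ → ℝ) : ∀ n, (lancPair α β n).1.natDegree ≤ n ∧
    (lancPair α β n).2.Monic ∧ (lancPair α β n).2.natDegree = n := by
  intro n
  induction n with
  | zero => simp [lancPair, monic_one]
  | succ n ih =>
    obtain ⟨h1, h2, h3⟩ := ih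
    have hmulm : ((X - C (α (n + 1))) * (lancPair α β n).2).Monic :=
      (monic_X_sub_C _).mul h2
    have hmuld : ((X - C (α (n + 1))) * (lancPair α β n).2).natDegree = n + 1 := by
      rw [(monic_X_sub_C _).natDegree_mul h2, natDegree_X_sub_C, h3, add_comm]
    have hsmall : (C ((β (n + 1)) ^ 2) * (lancPair α β n).1).natDegree ≤ n :=
      le_trans natDegree_mul_le (by simpa using h1)
    have hltn : (C ((β (n + 1)) ^ 2) * (lancPair α β n).1).natDegree
        < ((X - C (α (n + 1))) * (lancPair α β n).2).natDegree := by
      rw [hmuld]; omega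
    have hlt : (C ((β (n + 1)) ^ 2) * (lancPair α β n).1).degree
        < ((X - C (α (n + 1))) * (lancPair α β n).2).degree :=
      degree_lt_degree hltn
    refine ⟨?_, ?_, ?_⟩
    · show (lancPair α β n).2.natDegree ≤ n + 1
      rw [h3]; omega
    · exact hmulm.sub_of_left hlt
    · show ((X - C (α (n + 1))) * (lancPair α β n).2
          - C ((β (n + 1)) ^ 2) * (lancPair α β n).1).natDegree = n + 1
      rw [natDegree_sub_eq_left_of_natDegree_lt hltn, hmuld]

/-- The geometric mean `ρ^(m)(A,b) = (∏_{j=1}^m β_{j+1})^{1/m}` of the Lanczos subdiagonal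
coefficients equals the minimum over monic polynomials `p` of degree `m` of
`‖p(A) (b/‖b‖)‖^{1/m}`. -/
theorem stmt13 {d : ℕ}
    (A : EuclideanSpace ℝ (Fin d) →ₗ[ℝ] EuclideanSpace ℝ (Fin d))
    (hsym : ∀ x y, ⟪A x, y⟫ = ⟪x, A y⟫)
    (b : EuclideanSpace ℝ (Fin d)) (hb : b ≠ 0)
    (v : ℕ → EuclideanSpace ℝ (Fin d)) (α β : ℕ → ℝ) (m : ℕ) (hm : 1 ≤ m)
    (hv0 : v 0 = 0) (hβ1 : β 1 = 0) (hv1 : v 1 = ‖b‖⁻¹ • b)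
    (hβpos : ∀ l : ℕ, 0 ≤ β l)
    (horth : ∀ i k : ℕ, 1 ≤ i → i ≤ m + 1 → 1 ≤ k → k ≤ m + 1 →
      ⟪v i, v k⟫ = if i = k then 1 else 0)
    (hrec : ∀ l : ℕ, 1 ≤ l → l ≤ m →
      A (v l) = β (l + 1) • v (l + 1) + α l • v l + β l • v (l - 1))
    (hspan : ∀ l : ℕ, l ≤ m →
      Submodule.span ℝ (v '' Set.Icc 1 l) = Krylov A b l) :
    (∏ l ∈ Finset.Icc 2 (m + 1), β l) ^ ((1 : ℝ) / m)
      = sInf {x : ℝ | ∃ p : Polynomial ℝ, p.Monic ∧ p.natDegree = m ∧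
          x = (‖(Polynomial.aeval A p) b‖ / ‖b‖) ^ ((1 : ℝ) / m)} := by
  have hbnorm : (0 : ℝ) < ‖b‖ := norm_pos_iff.mpr hb
  set P : ℝ := ∏ l ∈ Finset.Icc 2 (m + 1), β l with hP
  have hPnonneg : 0 ≤ P := Finset.prod_nonneg fun i _ => hβpos i
  -- Key recurrence: aeval of the Lanczos polynomials on v 1.
  have key : ∀ l, l ≤ m →
      (Polynomial.aeval A (lancPair α β l).1) (v 1)
          = (∏ j ∈ Finset.Icc 2 l, β j) • v l ∧
      (Polynomial.aeval A (lancPair α β l).2) (v 1)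
          = (∏ j ∈ Finset.Icc 2 (l + 1), β j) • v (l + 1) := by
    intro l
    induction l with
    | zero =>
      intro _
      constructor
      · simp [lancPair, hv0]
      · simp [lancPair]
    | succ l ih =>
      intro hl1
      have hlm : l ≤ m := by omega
      obtain ⟨ih1, ih2⟩ := ih hlm
      refine ⟨ih2, ?_⟩
      have hrecl : A (v (l + 1)) = β (l + 2) • v (l + 2) + α (l + 1) • v (l + 1)
          + β (l + 1) • v l := by
        have := hrec (l + 1) (by omega) hl1
        simpa using this
      set Pl : ℝ := ∏ j ∈ Finset.Icc 2 (l + 1), β j with hPl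
      set Pr : ℝ := ∏ j ∈ Finset.Icc 2 l, β j with hPr
      have expand : (Polynomial.aeval A (lancPair α β (l + 1)).2) (v 1)
          = (Pl * β (l + 2)) • v (l + 2)
            + (Pl * β (l + 1) - β (l + 1) ^ 2 * Pr) • v l := by
        show (Polynomial.aeval A ((X - C (α (l + 1))) * (lancPair α β l).2
            - C ((β (l + 1)) ^ 2) * (lancPair α β l).1)) (v 1) = _
        rw [map_sub, map_mul, map_mul, map_sub, aeval_X, aeval_C, aeval_C,
          LinearMap.sub_apply, Module.End.mul_apply, Module.End.mul_apply,
          LinearMap.sub_apply, ih1, ih2, Module.algebraMap_end_apply,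
          Module.algebraMap_end_apply, map_smul, hrecl]
        module
      have hzero : (Pl * β (l + 1) - β (l + 1) ^ 2 * Pr) • v l = 0 := by
        rcases Nat.eq_zero_or_pos l with rfl | hpos
        · rw [hv0, smul_zero]
        · have : Pl = Pr * β (l + 1) := Finset.prod_Icc_succ_top (by omega) β
          rw [this]
          have : Pr * β (l + 1) * β (l + 1) - β (l + 1) ^ 2 * Pr = 0 := by ring
          rw [this, zero_smul]
      have hprod : ∏ j ∈ Finset.Icc 2 (l + 1 + 1), β j = Pl * β (l + 2) :=
        Finset.prod_Icc_succ_top (by omega) β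
      rw [expand, hzero, add_zero, hprod]
  -- unit norms
  have hunit : ∀ i, 1 ≤ i → i ≤ m + 1 → ‖v i‖ = 1 := by
    intro i h1 h2
    have h := horth i i h1 h2 h1 h2
    rw [if_pos rfl, real_inner_self_eq_norm_mul_norm] at h
    nlinarith [norm_nonneg (v i)]
  -- v (m+1) is orthogonal to the Krylov space
  have horthK : ∀ x ∈ Krylov A b m, ⟪v (m + 1), x⟫ = 0 := by
    intro x hx
    rw [← hspan m le_rfl] at hx
    induction hx using Submodule.span_induction with
    | mem y hy =>
      obtain ⟨k, hk, rfl⟩ := hy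
      obtain ⟨hk1, hk2⟩ : 1 ≤ k ∧ k ≤ m := hk
      have := horth (m + 1) k (by omega) le_rfl hk1 (by omega)
      rw [if_neg (by omega)] at this
      exact this
    | zero => exact inner_zero_right _
    | add y z _ _ hy hz => rw [inner_add_right, hy, hz, add_zero]
    | smul c y _ hy => rw [real_inner_smul_right, hy, mul_zero]
  -- low-degree polynomials land in the Krylov space
  have hlowdeg : ∀ r : Polynomial ℝ, r.natDegree < m →
      ⟪v (m + 1), (Polynomial.aeval A r) (v 1)⟫ = 0 := by
    intro r hr
    rw [Polynomial.aeval_eq_sum_range' hr]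
    rw [LinearMap.coe_sum, Finset.sum_apply]
    rw [inner_sum]
    apply Finset.sum_eq_zero
    intro i hi
    rw [LinearMap.smul_apply, real_inner_smul_right]
    have hmem : (A ^ i) (v 1) ∈ Krylov A b m := by
      rw [hv1, map_smul]
      exact Submodule.smul_mem _ _
        (Submodule.subset_span ⟨i, Finset.mem_range.mp hi, rfl⟩)
    rw [horthK _ hmem, mul_zero]
  -- the Lanczos polynomial of degree m
  set q : Polynomial ℝ := (lancPair α β m).2 with hq
  obtain ⟨-, hqmonic, hqdeg⟩ := lancPair_deg α β m
  rw [← hq] at hqmonic hqdeg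
  have hQ : (Polynomial.aeval A q) (v 1) = P • v (m + 1) := (key m le_rfl).2
  have hnormq : ‖(Polynomial.aeval A q) (v 1)‖ = P := by
    rw [hQ, norm_smul, hunit (m + 1) (by omega) le_rfl, mul_one,
      Real.norm_eq_abs, abs_of_nonneg hPnonneg]
  -- for any monic p of degree m, the inner product with v (m+1) equals P
  have hinner : ∀ p : Polynomial ℝ, p.Monic → p.natDegree = m →
      ⟪v (m + 1), (Polynomial.aeval A p) (v 1)⟫ = P := by
    intro p hmonic hdeg
    have hrdeg : (p - q).natDegree < m := by
      rcases eq_or_ne p q with rfl | hne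
      · simpa using (show 0 < m by omega)
      · have hdd : (p - q).degree < (m : WithBot ℕ) := by
          have := Polynomial.degree_sub_lt (p := p) (q := q)
            (by rw [degree_eq_natDegree hmonic.ne_zero,
                degree_eq_natDegree hqmonic.ne_zero, hdeg, hqdeg])
            hmonic.ne_zero
            (by rw [hmonic.leadingCoeff, hqmonic.leadingCoeff])
          rwa [degree_eq_natDegree hmonic.ne_zero, hdeg] at this
        exact (Polynomial.natDegree_lt_iff_degree_lt (sub_ne_zero.mpr hne)).mpr hdd
    have hsplit : p = q + (p - q) := by ring
    rw [hsplit, map_add, LinearMap.add_apply, inner_add_right, hQ,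
      real_inner_smul_right, hlowdeg _ hrdeg]
    have hvv := horth (m + 1) (m + 1) (by omega) le_rfl (by omega) le_rfl
    rw [if_pos rfl] at hvv
    rw [hvv]
    ring
  -- lower bound
  have hlb : ∀ p : Polynomial ℝ, p.Monic → p.natDegree = m →
      P ≤ ‖(Polynomial.aeval A p) (v 1)‖ := by
    intro p hmonic hdeg
    calc P = ⟪v (m + 1), (Polynomial.aeval A p) (v 1)⟫ := (hinner p hmonic hdeg).symm
      _ ≤ ‖v (m + 1)‖ * ‖(Polynomial.aeval A p) (v 1)‖ := real_inner_le_norm _ _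
      _ = ‖(Polynomial.aeval A p) (v 1)‖ := by
          rw [hunit (m + 1) (by omega) le_rfl, one_mul]
  -- rewriting the norm quotient
  have hSrew : ∀ p : Polynomial ℝ, ‖(Polynomial.aeval A p) b‖ / ‖b‖
      = ‖(Polynomial.aeval A p) (v 1)‖ := by
    intro p
    rw [hv1, map_smul, norm_smul, norm_inv, norm_norm]
    field_simp
  have hexp : (0 : ℝ) ≤ 1 / m := by positivity
  have hmemS : (P : ℝ) ^ ((1 : ℝ) / m) ∈ {x : ℝ | ∃ p : Polynomial ℝ, p.Monic ∧
      p.natDegree = m ∧ x = (‖(Polynomial.aeval A p) b‖ / ‖b‖) ^ ((1 : ℝ) / m)} := by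
    exact ⟨q, hqmonic, hqdeg, by rw [hSrew, hnormq]⟩
  have hlbS : ∀ x ∈ {x : ℝ | ∃ p : Polynomial ℝ, p.Monic ∧
      p.natDegree = m ∧ x = (‖(Polynomial.aeval A p) b‖ / ‖b‖) ^ ((1 : ℝ) / m)},
      P ^ ((1 : ℝ) / m) ≤ x := by
    rintro x ⟨p, hmonic, hdeg, rfl⟩
    rw [hSrew]
    exact Real.rpow_le_rpow hPnonneg (hlb p hmonic hdeg) hexp
  symm
  apply le_antisymm
  · exact csInf_le ⟨P ^ ((1 : ℝ) / m), hlbS⟩ hmemS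
  · exact le_csInf ⟨_, hmemS⟩ hlbS
end

section
/- Let H ∈ ℝ^{d×d} be symmetric with r distinct eigenvalues λ_1 > λ_2 > ⋯ > λ_r ≥ 0. If m < r, then for any nonzero g ∈ ℝ^d, ρ^(m)(H,g) = min over monic degree-m polynomials p of ‖p(H) g/‖g‖‖^{1/m} satisfies ρ^(m)(H,g) ≤ (∏_{i=1}^m λ_i)^{1/m}. -/
open scoped RealInnerProductSpace

/-- For a symmetric PSD `H` with distinct eigenvalues `λ_1 > ⋯ > λ_r ≥ 0` and `m < r`, for
any `g ≠ 0` the quantity `ρ^(m)(H,g) = min { ‖p(H)(g/‖g‖)‖^{1/m} : p monic of degree m }`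
is bounded by the geometric mean `(∏_{i=1}^m λ_i)^{1/m}` of the top `m` eigenvalues. -/
theorem stmt16 {d r : ℕ}
    (H : EuclideanSpace ℝ (Fin d) →ₗ[ℝ] EuclideanSpace ℝ (Fin d))
    (hsym : ∀ x y, ⟪H x, y⟫ = ⟪x, H y⟫)
    (lam : Fin r → ℝ) (hanti : StrictAnti lam) (hpos : ∀ i, 0 ≤ lam i)
    (heig : ∀ c : ℝ, Module.End.HasEigenvalue H c ↔ ∃ i, lam i = c)
    (g : EuclideanSpace ℝ (Fin d)) (hg : g ≠ 0)
    (m : ℕ) (hm : 1 ≤ m) (hmr : m < r) :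
    sInf {x : ℝ | ∃ p : Polynomial ℝ, p.Monic ∧ p.natDegree = m ∧
        x = (‖(Polynomial.aeval H p) g‖ / ‖g‖) ^ ((1 : ℝ) / m)}
      ≤ (∏ i : Fin m, lam (Fin.castLE hmr.le i)) ^ ((1 : ℝ) / m) := by
  classical
  have hsym' : H.IsSymmetric := hsym
  have hn : Module.finrank ℝ (EuclideanSpace ℝ (Fin d)) = d :=
    finrank_euclideanSpace_fin
  set b := hsym'.eigenvectorBasis hn with hb
  set μ := hsym'.eigenvalues hn with hμ
  set p : Polynomial ℝ :=
    ∏ i : Fin m, (Polynomial.X - Polynomial.C (lam (Fin.castLE hmr.le i))) with hp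
  set C : ℝ := ∏ i : Fin m, lam (Fin.castLE hmr.le i) with hC
  have hCnonneg : 0 ≤ C := Finset.prod_nonneg fun i _ => hpos _
  have hmonic : p.Monic :=
    Polynomial.monic_prod_of_monic _ _ fun i _ => Polynomial.monic_X_sub_C _
  have hdeg : p.natDegree = m := by
    rw [hp, Polynomial.natDegree_prod]
    · simp
    · intro i _
      exact (Polynomial.monic_X_sub_C _).ne_zero
  -- bound on eigenvalues
  have key : ∀ i : Fin d, |p.eval (μ i)| ≤ C := by
    intro i
    obtain ⟨j, hj⟩ := (heig (μ i)).1 (hsym'.hasEigenvalue_eigenvalues hn i)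
    rw [← hj]
    have heval : p.eval (lam j) =
        ∏ k : Fin m, (lam j - lam (Fin.castLE hmr.le k)) := by
      simp [hp, Polynomial.eval_prod]
    rw [heval]
    by_cases hjm : (j : ℕ) < m
    · have : lam j - lam (Fin.castLE hmr.le ⟨(j : ℕ), hjm⟩) = 0 := by
        have : Fin.castLE hmr.le ⟨(j : ℕ), hjm⟩ = j := by
          ext; simp
        rw [this]; ring
      rw [Finset.prod_eq_zero (Finset.mem_univ ⟨(j : ℕ), hjm⟩) this]
      simpa using hCnonneg
    · push_neg at hjm
      rw [Finset.abs_prod]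
      apply Finset.prod_le_prod (fun k _ => abs_nonneg _)
      intro k _
      have hlt : lam j < lam (Fin.castLE hmr.le k) := by
        apply hanti
        rw [Fin.lt_def]
        exact lt_of_lt_of_le k.isLt hjm
      have h0 : 0 ≤ lam j := hpos j
      have habs : |lam j - lam (Fin.castLE hmr.le k)| =
          lam (Fin.castLE hmr.le k) - lam j := by
        rw [abs_of_nonpos (by linarith)]; ring
      rw [habs]
      linarith
  -- norm bound
  have hnorm : ‖(Polynomial.aeval H p) g‖ ≤ C * ‖g‖ := by
    set w : EuclideanSpace ℝ (Fin d) := WithLp.toLp 2 (fun i => p.eval (μ i) * b.repr g i) with hw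
    have happ : (Polynomial.aeval H p) g = b.repr.symm w := by
      conv_lhs => rw [← b.sum_repr g]
      rw [← b.sum_repr_symm w]
      rw [map_sum]
      apply Finset.sum_congr rfl
      intro i _
      rw [map_smul]
      have hev : (Polynomial.aeval H p) (b i) = p.eval (μ i) • b i :=
        Module.End.aeval_apply_of_hasEigenvector
          (hsym'.hasEigenvector_eigenvectorBasis hn i)
      rw [hev, smul_smul, mul_comm]
    rw [happ]
    have h1 : ‖b.repr.symm w‖ = ‖w‖ := b.repr.symm.norm_map w
    have h2 : ‖g‖ = ‖b.repr g‖ := (b.repr.norm_map g).symm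
    rw [h1, h2]
    rw [EuclideanSpace.norm_eq, EuclideanSpace.norm_eq]
    rw [← Real.sqrt_sq hCnonneg, ← Real.sqrt_mul (sq_nonneg C)]
    apply Real.sqrt_le_sqrt
    rw [Finset.mul_sum]
    apply Finset.sum_le_sum
    intro i _
    have : ‖w i‖ ≤ C * ‖b.repr g i‖ := by
      rw [hw]
      simp only [Real.norm_eq_abs, abs_mul]
      exact mul_le_mul_of_nonneg_right (key i) (abs_nonneg _)
    calc ‖w i‖ ^ 2 ≤ (C * ‖b.repr g i‖) ^ 2 := by
          apply sq_le_sq' _ this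
          nlinarith [norm_nonneg (w i), norm_nonneg (b.repr g i), mul_nonneg hCnonneg (norm_nonneg (b.repr g i))]
      _ = C ^ 2 * ‖b.repr g i‖ ^ 2 := by ring
  -- conclude
  have hgpos : 0 < ‖g‖ := norm_pos_iff.mpr hg
  have hbase : ‖(Polynomial.aeval H p) g‖ / ‖g‖ ≤ C := by
    rw [div_le_iff₀ hgpos]
    exact hnorm
  have hx : (‖(Polynomial.aeval H p) g‖ / ‖g‖) ^ ((1 : ℝ) / m)
      ≤ C ^ ((1 : ℝ) / m) := by
    apply Real.rpow_le_rpow (div_nonneg (norm_nonneg _) (norm_nonneg _)) hbase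
    positivity
  refine le_trans (csInf_le ?_ ⟨p, hmonic, hdeg, rfl⟩) hx
  refine ⟨0, ?_⟩
  rintro x ⟨q, _, _, rfl⟩
  exact Real.rpow_nonneg (div_nonneg (norm_nonneg _) (norm_nonneg _)) _
end
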